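/- With H as above, on the boundary (x_N = 0) one has ∂_t H(x,y,t) + ∂_ν H(x,y,t) = −2(∂_{x_N}Γ_N)(x'−y', y_N, t), where ∂_ν = −∂_{x_N}. Consequently G = Γ_N(x−y,t) − Γ_N(x−y*,t) + H satisfies the dynamical boundary condition ∂_t G + ∂_ν G = 0 on ∂Ω × (0,∞). -/

import Mathlib

open Real MeasureTheory Set

set_option maxHeartbeats 1000000

/-- The `N`-dimensional Gauss kernel `Γ_N(x,t) = (4πt)^{-N/2} e^{-|x|²/(4t)}`. -/
noncomputable def gauss (N : ℕ) (x : Fin N → ℝ) (t : ℝ) : ℝ :=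
  (4 * π * t) ^ (-(N : ℝ) / 2) * Real.exp (-(∑ i, x i ^ 2) / (4 * t))

/-- Reflection `y* = (y', -y_N)` across the boundary of the half-space. -/
noncomputable def ystar (N : ℕ) (y : Fin (N + 1) → ℝ) : Fin (N + 1) → ℝ :=
  Function.update y (Fin.last N) (-(y (Fin.last N)))

/-- The last unit vector `e_N`. -/
noncomputable def eN (N : ℕ) : Fin (N + 1) → ℝ := Pi.single (Fin.last N) 1

/-- `H(x,y,t) = -2 ∫_0^t (∂_{x_N}Γ_N)(x - y* + τ e_N, t - τ) dτ`. -/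
noncomputable def hker (N : ℕ) (x y : Fin (N + 1) → ℝ) (t : ℝ) : ℝ :=
  -2 * ∫ τ in (0 : ℝ)..t,
    deriv (fun s => gauss (N + 1)
        (Function.update (x - ystar N y + τ • eN N) (Fin.last N) s) (t - τ))
      ((x - ystar N y + τ • eN N) (Fin.last N))

/-- The fundamental solution `G(x,y,t) = Γ_N(x-y,t) - Γ_N(x-y*,t) + H(x,y,t)`. -/
noncomputable def Gker (N : ℕ) (x y : Fin (N + 1) → ℝ) (t : ℝ) : ℝ :=
  gauss (N + 1) (x - y) t - gauss (N + 1) (x - ystar N y) t + hker N x y t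


noncomputable def fK (ν A u s : ℝ) : ℝ :=
  (4 * π * u) ^ (-ν / 2) * Real.exp (-(A + s ^ 2) / (4 * u))

noncomputable def wK (ν A u s : ℝ) : ℝ := (-s / (2 * u)) * fK ν A u s

noncomputable def wK' (ν A u s : ℝ) : ℝ :=
  (s ^ 2 / (4 * u ^ 2) - 1 / (2 * u)) * fK ν A u s

lemma fK_zero {ν : ℝ} (hν : ν ≠ 0) (A s : ℝ) : fK ν A 0 s = 0 := by
  have h : (-ν / 2 : ℝ) ≠ 0 := div_ne_zero (neg_ne_zero.2 hν) two_ne_zero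
  simp [fK, Real.zero_rpow h]

lemma wK_zero (ν A s : ℝ) : wK ν A 0 s = 0 := by simp [wK]

lemma hasDerivAt_fK {u : ℝ} (hu : u ≠ 0) (ν A s₀ : ℝ) :
    HasDerivAt (fun s => fK ν A u s) (wK ν A u s₀) s₀ := by
  have h : HasDerivAt (fun s : ℝ => -(A + s ^ 2) / (4 * u)) (-(2 * s₀ ^ 1) / (4 * u)) s₀ :=
    (((hasDerivAt_pow 2 s₀).const_add A).neg).div_const (4 * u)
  have h2 := (h.exp).const_mul ((4 * π * u) ^ (-ν / 2))
  refine h2.congr_deriv ?_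
  simp only [wK, fK, pow_one]
  field_simp
  ring

lemma hasDerivAt_wK (ν A σ r₀ : ℝ) :
    HasDerivAt (fun r => wK ν A σ r) (wK' ν A σ r₀) r₀ := by
  rcases eq_or_ne σ 0 with rfl | hσ
  · have h : (fun r => wK ν A 0 r) = fun _ => (0 : ℝ) := funext fun r => wK_zero ν A r
    rw [h]
    have : wK' ν A 0 r₀ = 0 := by simp [wK']
    rw [this]
    exact hasDerivAt_const _ _
  · have h1 : HasDerivAt (fun r : ℝ => -r / (2 * σ)) (-1 / (2 * σ)) r₀ :=
      ((hasDerivAt_id r₀).neg).div_const (2 * σ)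
    have h2 := h1.mul (hasDerivAt_fK hσ ν A r₀)
    refine h2.congr_deriv ?_
    simp only [wK, wK']
    field_simp
    ring

lemma continuousOn_wK_pair (ν A : ℝ) :
    ContinuousOn (fun p : ℝ × ℝ => wK ν A p.1 p.2) {p : ℝ × ℝ | 0 < p.1} := by
  intro p hp
  have hp1 : (0 : ℝ) < p.1 := hp
  apply ContinuousAt.continuousWithinAt
  have hrpow : ContinuousAt (fun p : ℝ × ℝ => (4 * π * p.1) ^ (-ν / 2)) p := by
    have hbase : ContinuousAt (fun p : ℝ × ℝ => 4 * π * p.1) p := by fun_prop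
    exact (Real.continuousAt_rpow_const _ _ (Or.inl (by positivity))).comp hbase
  have hexp : ContinuousAt (fun p : ℝ × ℝ => Real.exp (-(A + p.2 ^ 2) / (4 * p.1))) p := by
    apply Real.continuous_exp.continuousAt.comp
    exact ContinuousAt.div (by fun_prop) (by fun_prop) (by positivity)
  have hfrac : ContinuousAt (fun p : ℝ × ℝ => -p.2 / (2 * p.1)) p :=
    ContinuousAt.div (by fun_prop) (by fun_prop) (by positivity)
  exact hfrac.mul (hrpow.mul hexp)

lemma continuousOn_wK'_pair (ν A : ℝ) :
    ContinuousOn (fun p : ℝ × ℝ => wK' ν A p.1 p.2) {p : ℝ × ℝ | 0 < p.1} := by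
  intro p hp
  have hp1 : (0 : ℝ) < p.1 := hp
  apply ContinuousAt.continuousWithinAt
  have hrpow : ContinuousAt (fun p : ℝ × ℝ => (4 * π * p.1) ^ (-ν / 2)) p := by
    have hbase : ContinuousAt (fun p : ℝ × ℝ => 4 * π * p.1) p := by fun_prop
    exact (Real.continuousAt_rpow_const _ _ (Or.inl (by positivity))).comp hbase
  have hexp : ContinuousAt (fun p : ℝ × ℝ => Real.exp (-(A + p.2 ^ 2) / (4 * p.1))) p := by
    apply Real.continuous_exp.continuousAt.comp
    exact ContinuousAt.div (by fun_prop) (by fun_prop) (by positivity)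
  have hfrac : ContinuousAt (fun p : ℝ × ℝ => p.2 ^ 2 / (4 * p.1 ^ 2) - 1 / (2 * p.1)) p := by
    apply ContinuousAt.sub
    · exact ContinuousAt.div (by fun_prop) (by fun_prop) (by positivity)
    · exact ContinuousAt.div (by fun_prop) (by fun_prop) (by positivity)
  exact hfrac.mul (hrpow.mul hexp)

lemma continuousOn_wK_line (ν A b : ℝ) :
    ContinuousOn (fun σ => wK ν A σ (b - σ)) (Ioi (0 : ℝ)) := by
  intro σ hσ
  have hσ0 : (0 : ℝ) < σ := hσ
  apply ContinuousAt.continuousWithinAt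
  have hrpow : ContinuousAt (fun σ : ℝ => (4 * π * σ) ^ (-ν / 2)) σ := by
    have hbase : ContinuousAt (fun σ : ℝ => 4 * π * σ) σ := by fun_prop
    exact (Real.continuousAt_rpow_const _ _ (Or.inl (by positivity))).comp hbase
  have hexp : ContinuousAt (fun σ : ℝ => Real.exp (-(A + (b - σ) ^ 2) / (4 * σ))) σ := by
    apply Real.continuous_exp.continuousAt.comp
    exact ContinuousAt.div (by fun_prop) (by fun_prop) (by positivity)
  have hfrac : ContinuousAt (fun σ : ℝ => -(b - σ) / (2 * σ)) σ :=
    ContinuousAt.div (by fun_prop) (by fun_prop) (by positivity)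
  exact hfrac.mul (hrpow.mul hexp)

lemma continuousOn_wK'_line (ν A b : ℝ) :
    ContinuousOn (fun σ => wK' ν A σ (b - σ)) (Ioi (0 : ℝ)) := by
  intro σ hσ
  have hσ0 : (0 : ℝ) < σ := hσ
  apply ContinuousAt.continuousWithinAt
  have hrpow : ContinuousAt (fun σ : ℝ => (4 * π * σ) ^ (-ν / 2)) σ := by
    have hbase : ContinuousAt (fun σ : ℝ => 4 * π * σ) σ := by fun_prop
    exact (Real.continuousAt_rpow_const _ _ (Or.inl (by positivity))).comp hbase
  have hexp : ContinuousAt (fun σ : ℝ => Real.exp (-(A + (b - σ) ^ 2) / (4 * σ))) σ := by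
    apply Real.continuous_exp.continuousAt.comp
    exact ContinuousAt.div (by fun_prop) (by fun_prop) (by positivity)
  have hfrac : ContinuousAt (fun σ : ℝ => (b - σ) ^ 2 / (4 * σ ^ 2) - 1 / (2 * σ)) σ := by
    apply ContinuousAt.sub
    · exact ContinuousAt.div (by fun_prop) (by fun_prop) (by positivity)
    · exact ContinuousAt.div (by fun_prop) (by fun_prop) (by positivity)
  exact hfrac.mul (hrpow.mul hexp)

lemma rpow_exp_bound {p k : ℝ} (hp : 0 ≤ p) (hk : 0 < k) :
    ∃ M : ℝ, 0 ≤ M ∧ ∀ σ : ℝ, 0 < σ → σ ^ (-p) * Real.exp (-(k / σ)) ≤ M := by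
  set n : ℕ := ⌈p⌉₊ with hn
  refine ⟨1 + ((Nat.factorial n : ℕ) : ℝ) / k ^ n, by positivity, fun σ hσ => ?_⟩
  have hσp : σ ^ (-p) = (σ⁻¹) ^ p := by
    rw [Real.rpow_neg hσ.le, ← Real.inv_rpow hσ.le]
  have hu : 0 < σ⁻¹ := by positivity
  have hks : k / σ = k * σ⁻¹ := div_eq_mul_inv k σ
  rcases le_total σ⁻¹ 1 with hu1 | hu1
  · have h1 : (σ⁻¹) ^ p ≤ 1 := Real.rpow_le_one hu.le hu1 hp
    have h2 : Real.exp (-(k / σ)) ≤ 1 := Real.exp_le_one_iff.2 (neg_nonpos.2 (div_nonneg hk.le hσ.le))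
    have hf : (0:ℝ) ≤ ((Nat.factorial n : ℕ) : ℝ) / k ^ n := by positivity
    have hE := (Real.exp_pos (-(k / σ))).le
    have hP := Real.rpow_nonneg hu.le p
    rw [hσp]
    nlinarith
  · have h1 : (σ⁻¹) ^ p ≤ (σ⁻¹) ^ (n : ℝ) :=
      Real.rpow_le_rpow_of_exponent_le hu1 (Nat.le_ceil p)
    have h2 : (σ⁻¹) ^ (n : ℝ) = (σ⁻¹) ^ n := Real.rpow_natCast _ n
    have h3 : (k * σ⁻¹) ^ n / (Nat.factorial n : ℝ) ≤ Real.exp (k * σ⁻¹) := by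
      calc (k * σ⁻¹) ^ n / (Nat.factorial n : ℝ) ≤ ∑ i ∈ Finset.range (n + 1), (k * σ⁻¹) ^ i / (Nat.factorial i : ℝ) := by
            exact Finset.single_le_sum (f := fun i => (k * σ⁻¹) ^ i / ((Nat.factorial i : ℕ) : ℝ))
              (fun i _ => by positivity) (Finset.self_mem_range_succ n)
        _ ≤ Real.exp (k * σ⁻¹) := Real.sum_le_exp_of_nonneg (by positivity) _
  -- from h3: (σ⁻¹)^n ≤ n! * exp(k σ⁻¹) / k^n
    have h4 : (σ⁻¹) ^ n ≤ ((Nat.factorial n : ℕ) : ℝ) * Real.exp (k * σ⁻¹) / k ^ n := by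
      rw [div_le_iff₀ (by exact_mod_cast Nat.factorial_pos n : (0:ℝ) < (Nat.factorial n : ℝ))] at h3
      rw [mul_pow] at h3
      rw [le_div_iff₀ (pow_pos hk n)]
      calc (σ⁻¹) ^ n * k ^ n = k ^ n * (σ⁻¹) ^ n := by ring
        _ ≤ Real.exp (k * σ⁻¹) * (Nat.factorial n : ℝ) := h3
        _ = ((Nat.factorial n : ℕ) : ℝ) * Real.exp (k * σ⁻¹) := by ring
    have hexpinv : Real.exp (-(k / σ)) = (Real.exp (k * σ⁻¹))⁻¹ := by
      rw [hks, Real.exp_neg]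
    have hE := Real.exp_pos (k * σ⁻¹)
    calc σ ^ (-p) * Real.exp (-(k / σ)) = (σ⁻¹) ^ p * (Real.exp (k * σ⁻¹))⁻¹ := by
          rw [hσp, hexpinv]
      _ ≤ (((Nat.factorial n : ℕ) : ℝ) * Real.exp (k * σ⁻¹) / k ^ n) * (Real.exp (k * σ⁻¹))⁻¹ := by
          exact mul_le_mul_of_nonneg_right ((h1.trans_eq h2).trans h4) (inv_nonneg.2 hE.le)
      _ = ((Nat.factorial n : ℕ) : ℝ) / k ^ n := by field_simp
      _ ≤ 1 + ((Nat.factorial n : ℕ) : ℝ) / k ^ n := by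
          have : (0:ℝ) ≤ 1 := zero_le_one
          linarith

lemma fK_le {ν A σ r : ℝ} (hν : 0 ≤ ν) (hA : 0 ≤ A) (hσ : 0 < σ) :
    fK ν A σ r ≤ (4 * π) ^ (-ν / 2) * (σ ^ (-(ν / 2 + 2)) * σ ^ 2 * Real.exp (-(r ^ 2 / 4) / σ)) := by
  have hπ : (0:ℝ) < π := Real.pi_pos
  have h1 : (4 * π * σ) ^ (-ν / 2) = (4 * π) ^ (-ν / 2) * σ ^ (-ν / 2) :=
    Real.mul_rpow (by positivity) hσ.le
  have h2 : σ ^ (-ν / 2) = σ ^ (-(ν / 2 + 2)) * σ ^ 2 := by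
    rw [← Real.rpow_natCast σ 2, ← Real.rpow_add hσ]
    norm_num [neg_div]
  have h3 : Real.exp (-(A + r ^ 2) / (4 * σ)) ≤ Real.exp (-(r ^ 2 / 4) / σ) := by
    apply Real.exp_le_exp.2
    rw [div_le_div_iff₀ (by positivity) hσ]
    nlinarith
  calc fK ν A σ r = ((4 * π) ^ (-ν / 2) * σ ^ (-ν / 2)) * Real.exp (-(A + r ^ 2) / (4 * σ)) := by
        rw [fK, h1]
    _ ≤ ((4 * π) ^ (-ν / 2) * σ ^ (-ν / 2)) * Real.exp (-(r ^ 2 / 4) / σ) := by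
        apply mul_le_mul_of_nonneg_left h3
        positivity
    _ = (4 * π) ^ (-ν / 2) * (σ ^ (-(ν / 2 + 2)) * σ ^ 2 * Real.exp (-(r ^ 2 / 4) / σ)) := by
        rw [h2]; ring

lemma key_bound {ν A : ℝ} (hν : 0 ≤ ν) (hA : 0 ≤ A) {δ ρ T B : ℝ}
    (hδ : 0 < δ) (hρ : 0 < ρ) (hT : 0 < T) (hB : 0 < B) :
    ∃ M : ℝ, 0 < M ∧ ∀ σ r : ℝ, 0 < σ → σ ≤ T → |r| ≤ B → (σ ≤ δ → ρ ≤ r ^ 2) →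
      |wK ν A σ r| ≤ M ∧ |wK' ν A σ r| ≤ M := by
  have hπ : (0:ℝ) < π := Real.pi_pos
  obtain ⟨M₁, hM₁0, hM₁⟩ := rpow_exp_bound (p := ν / 2 + 2) (by linarith) (k := ρ / 4)
    (by positivity)
  set C : ℝ := (4 * π) ^ (-ν / 2) * (B * T / 2 + B ^ 2 / 4 + T / 2) with hC
  have hC0 : 0 < C := by positivity
  refine ⟨C * (M₁ + δ ^ (-(ν / 2 + 2))) + 1, by positivity, fun σ r hσ hσT hrB hσδ => ?_⟩
  set p : ℝ := ν / 2 + 2 with hp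
  -- bound on Q := σ^(-p) * exp(-(r^2/4)/σ)
  have hQ : σ ^ (-p) * Real.exp (-(r ^ 2 / 4) / σ) ≤ M₁ + δ ^ (-p) := by
    rcases le_or_gt σ δ with h | h
    · have hr2 : ρ ≤ r ^ 2 := hσδ h
      have h5 : Real.exp (-(r ^ 2 / 4) / σ) ≤ Real.exp (-(ρ / 4 / σ)) := by
        apply Real.exp_le_exp.2
        rw [neg_div]
        apply neg_le_neg
        gcongr
      have h6 := hM₁ σ hσ
      have h7 : (0:ℝ) ≤ δ ^ (-p) := Real.rpow_nonneg hδ.le _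
      have h8 : (0:ℝ) ≤ σ ^ (-p) := Real.rpow_nonneg hσ.le _
      nlinarith [Real.exp_pos (-(r ^ 2 / 4) / σ)]
    · have h5 : σ ^ (-p) ≤ δ ^ (-p) := by
        rw [Real.rpow_neg hσ.le, Real.rpow_neg hδ.le, ← Real.inv_rpow hσ.le,
          ← Real.inv_rpow hδ.le]
        apply Real.rpow_le_rpow (by positivity) _ (by simp only [hp]; linarith)
        exact inv_anti₀ hδ h.le
      have h6 : Real.exp (-(r ^ 2 / 4) / σ) ≤ 1 := by
        apply Real.exp_le_one_iff.2
        rw [neg_div]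
        simp only [neg_nonpos]
        positivity
      have h8 : (0:ℝ) ≤ σ ^ (-p) := Real.rpow_nonneg hσ.le _
      nlinarith [Real.exp_pos (-(r ^ 2 / 4) / σ)]
  have hfle := fK_le (ν := ν) (A := A) (r := r) hν hA hσ
  have hf0 : 0 ≤ fK ν A σ r := by
    rw [fK]
    positivity
  have hE0 : (0:ℝ) < Real.exp (-(r ^ 2 / 4) / σ) := Real.exp_pos _
  have hQ0 : (0:ℝ) ≤ σ ^ (-p) := Real.rpow_nonneg hσ.le _
  have h4π : (0:ℝ) < (4 * π) ^ (-ν / 2) := Real.rpow_pos_of_pos (by positivity) _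
  constructor
  · have habs : |wK ν A σ r| = |r| / (2 * σ) * fK ν A σ r := by
      rw [wK, abs_mul, abs_of_nonneg hf0, abs_div, abs_neg, abs_of_nonneg (by positivity : (0:ℝ) ≤ 2 * σ)]
    rw [habs]
    calc |r| / (2 * σ) * fK ν A σ r
        ≤ B / (2 * σ) * ((4 * π) ^ (-ν / 2) * (σ ^ (-p) * σ ^ 2 * Real.exp (-(r ^ 2 / 4) / σ))) := by
          apply mul_le_mul _ hfle hf0 (by positivity)
          gcongr
      _ = ((4 * π) ^ (-ν / 2) * (B * σ / 2)) * (σ ^ (-p) * Real.exp (-(r ^ 2 / 4) / σ)) := by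
          field_simp
      _ ≤ ((4 * π) ^ (-ν / 2) * (B * T / 2)) * (σ ^ (-p) * Real.exp (-(r ^ 2 / 4) / σ)) := by
          apply mul_le_mul_of_nonneg_right _ (by positivity)
          apply mul_le_mul_of_nonneg_left _ h4π.le
          nlinarith
      _ ≤ C * (M₁ + δ ^ (-p)) := by
          apply mul_le_mul _ hQ (by positivity) hC0.le
          rw [hC]
          apply mul_le_mul_of_nonneg_left _ h4π.le
          nlinarith
      _ ≤ C * (M₁ + δ ^ (-p)) + 1 := by linarith
  · have habs : |wK' ν A σ r| ≤ (r ^ 2 / (4 * σ ^ 2) + 1 / (2 * σ)) * fK ν A σ r := by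
      rw [wK', abs_mul, abs_of_nonneg hf0]
      apply mul_le_mul_of_nonneg_right _ hf0
      calc |r ^ 2 / (4 * σ ^ 2) - 1 / (2 * σ)| ≤ |r ^ 2 / (4 * σ ^ 2)| + |1 / (2 * σ)| :=
            abs_sub _ _
        _ = r ^ 2 / (4 * σ ^ 2) + 1 / (2 * σ) := by
            rw [abs_of_nonneg (by positivity), abs_of_nonneg (by positivity)]
    calc |wK' ν A σ r| ≤ (r ^ 2 / (4 * σ ^ 2) + 1 / (2 * σ)) * fK ν A σ r := habs
      _ ≤ ((B ^ 2 / 4 + σ / 2) / σ ^ 2) * ((4 * π) ^ (-ν / 2) * (σ ^ (-p) * σ ^ 2 * Real.exp (-(r ^ 2 / 4) / σ))) := by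
          apply mul_le_mul _ hfle hf0 (by positivity)
          have hr2B : r ^ 2 ≤ B ^ 2 := by
            nlinarith [sq_abs r, mul_self_le_mul_self (abs_nonneg r) hrB]
          rw [div_add_div _ _ (by positivity) (by positivity), div_le_div_iff₀ (by positivity) (by positivity)]
          nlinarith [hr2B, pow_pos hσ 3, pow_pos hσ 2]
      _ = ((4 * π) ^ (-ν / 2) * (B ^ 2 / 4 + σ / 2)) * (σ ^ (-p) * Real.exp (-(r ^ 2 / 4) / σ)) := by
          field_simp
      _ ≤ ((4 * π) ^ (-ν / 2) * (B ^ 2 / 4 + T / 2)) * (σ ^ (-p) * Real.exp (-(r ^ 2 / 4) / σ)) := by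
          apply mul_le_mul_of_nonneg_right _ (by positivity)
          apply mul_le_mul_of_nonneg_left _ h4π.le
          linarith
      _ ≤ C * (M₁ + δ ^ (-p)) := by
          apply mul_le_mul _ hQ (by positivity) hC0.le
          rw [hC]
          apply mul_le_mul_of_nonneg_left _ h4π.le
          nlinarith
      _ ≤ C * (M₁ + δ ^ (-p)) + 1 := by linarith

lemma abs_sub_le_of_uIoc {σ a b : ℝ} (h : σ ∈ Set.uIoc a b) : |σ - a| ≤ |b - a| := by
  rcases le_total a b with hab | hab
  · rw [uIoc_of_le hab] at h
    rw [abs_of_nonneg (by linarith [h.1.le] : (0:ℝ) ≤ σ - a),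
      abs_of_nonneg (by linarith : (0:ℝ) ≤ b - a)]
    linarith [h.2]
  · rw [uIoc_of_ge hab] at h
    rw [abs_of_nonpos (by linarith [h.2] : σ - a ≤ 0),
      abs_of_nonpos (by linarith : b - a ≤ 0)]
    linarith [h.1.le]

lemma hasDerivAt_E {ν A : ℝ} {t c : ℝ} (ht : 0 < t) :
    HasDerivAt (fun u => ∫ σ in t..u, wK ν A σ (c + u - σ)) (wK ν A t c) t := by
  have hcont : ContinuousAt (fun p : ℝ × ℝ => wK ν A p.1 (c + p.2 - p.1)) (t, t) := by
    have hmap : ContinuousAt (fun p : ℝ × ℝ => ((p.1, c + p.2 - p.1) : ℝ × ℝ)) (t, t) := by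
      fun_prop
    have h2 : ContinuousAt (fun p : ℝ × ℝ => wK ν A p.1 p.2) (t, c + t - t) := by
      have := (continuousOn_wK_pair ν A).continuousAt (x := ((t, c + t - t) : ℝ × ℝ))
        (IsOpen.mem_nhds ?_ ?_)
      · exact this
      · have : {p : ℝ × ℝ | 0 < p.1} = (Ioi (0:ℝ)) ×ˢ (univ : Set ℝ) := by
          ext p; simp [Set.mem_prod]
        rw [this]
        exact isOpen_Ioi.prod isOpen_univ
      · exact ht
    exact ContinuousAt.comp (g := fun p : ℝ × ℝ => wK ν A p.1 p.2)
      (f := fun p : ℝ × ℝ => ((p.1, c + p.2 - p.1) : ℝ × ℝ)) h2 hmap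
  rw [hasDerivAt_iff_isLittleO]
  rw [Asymptotics.isLittleO_iff]
  intro ε hε
  have hε2 : (0:ℝ) < ε := hε
  -- continuity gives δ
  obtain ⟨δ, hδ0, hδ⟩ := Metric.continuousAt_iff.1 hcont ε hε2
  simp only [add_sub_cancel_right] at hδ
  set δ' := min δ (t / 2) with hδ'
  have hδ'0 : 0 < δ' := lt_min hδ0 (by positivity)
  filter_upwards [Metric.ball_mem_nhds t hδ'0] with u hu
  have hud : |u - t| < δ' := by
    have := Metric.mem_ball.1 hu
    rwa [Real.dist_eq] at this
  have hut2 : |u - t| < t / 2 := lt_of_lt_of_le hud (min_le_right _ _)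
  have hutδ : |u - t| < δ := lt_of_lt_of_le hud (min_le_left _ _)
  -- integrand continuity on the interval
  have hsub : uIcc t u ⊆ Ioi (0:ℝ) := by
    intro σ hσ
    have h1 : min t u ≤ σ := hσ.1
    have h5 : t / 2 < min t u := by
      rcases abs_sub_lt_iff.1 hut2 with ⟨h2, h3⟩
      rcases le_total t u with h4 | h4
      · rw [min_eq_left h4]; linarith
      · rw [min_eq_right h4]; linarith
    have h0 : (0:ℝ) < t / 2 := by positivity
    exact Set.mem_Ioi.2 (by linarith)
  have hcontOn : ContinuousOn (fun σ => wK ν A σ (c + u - σ)) (uIcc t u) :=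
    (continuousOn_wK_line ν A (c + u)).mono hsub
  have hInt : IntervalIntegrable (fun σ => wK ν A σ (c + u - σ)) volume t u :=
    hcontOn.intervalIntegrable
  rw [intervalIntegral.integral_same, sub_zero]
  have heq : (∫ σ in t..u, wK ν A σ (c + u - σ)) - (u - t) • wK ν A t c
      = ∫ σ in t..u, (wK ν A σ (c + u - σ) - wK ν A t c) := by
    rw [intervalIntegral.integral_sub hInt intervalIntegrable_const,
      intervalIntegral.integral_const]
  rw [heq, Real.norm_eq_abs (u - t), ← abs_sub_comm t u]
  have hbnd : ∀ σ ∈ Set.uIoc t u, ‖wK ν A σ (c + u - σ) - wK ν A t c‖ ≤ ε := by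
    intro σ hσ
    have hd : dist ((σ, u) : ℝ × ℝ) ((t, t) : ℝ × ℝ) < δ := by
      rw [Prod.dist_eq]
      apply max_lt
      · rw [Real.dist_eq]
        exact lt_of_le_of_lt (abs_sub_le_of_uIoc hσ) hutδ
      · rw [Real.dist_eq]
        exact hutδ
    rw [Real.norm_eq_abs, ← Real.dist_eq]
    exact (hδ hd).le
  calc ‖∫ σ in t..u, (wK ν A σ (c + u - σ) - wK ν A t c)‖
      ≤ ε * |u - t| := intervalIntegral.norm_integral_le_of_norm_le_const hbnd
    _ = ε * |t - u| := by rw [abs_sub_comm]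

lemma II_of_bounded {g : ℝ → ℝ} {T M : ℝ} (hT : 0 ≤ T)
    (hg : ContinuousOn g (Ioi (0:ℝ))) (hM : ∀ σ ∈ Ioc (0:ℝ) T, |g σ| ≤ M) :
    IntervalIntegrable g volume 0 T := by
  rw [intervalIntegrable_iff, uIoc_of_le hT]
  refine ⟨(hg.mono Ioc_subset_Ioi_self).aestronglyMeasurable measurableSet_Ioc, ?_⟩
  apply MeasureTheory.HasFiniteIntegral.restrict_of_bounded (C := M) measure_Ioc_lt_top
  exact (ae_restrict_iff' measurableSet_Ioc).2 (Filter.Eventually.of_forall fun σ h => by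
    simpa [Real.norm_eq_abs] using hM σ h)

lemma II_wK {ν A : ℝ} (hν : 0 ≤ ν) (hA : 0 ≤ A) {b T : ℝ} (hb : 0 < b) (hT : 0 < T) :
    IntervalIntegrable (fun σ => wK ν A σ (b - σ)) volume 0 T := by
  obtain ⟨M, hM0, hM⟩ := key_bound hν hA (δ := b / 2) (ρ := (b / 2) ^ 2) (T := T)
    (B := |b| + T) (by positivity) (by positivity) hT (by positivity)
  apply II_of_bounded hT.le (continuousOn_wK_line ν A b)
  intro σ hσ
  refine (hM σ (b - σ) hσ.1 hσ.2 ?_ ?_).1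
  · have : |b - σ| ≤ |b| + |σ| := abs_sub _ _
    rw [abs_of_pos hσ.1] at this
    linarith [hσ.2]
  · intro hle
    have h1 : b / 2 ≤ b - σ := by linarith
    have h2 : (0:ℝ) ≤ b / 2 := by positivity
    nlinarith

lemma hasDerivAt_K {ν A : ℝ} (hν : 0 ≤ ν) (hA : 0 ≤ A) {t b₀ : ℝ} (ht : 0 < t)
    (hb : t ≤ b₀) :
    HasDerivAt (fun b => ∫ σ in (0:ℝ)..t, wK ν A σ (b - σ))
      (∫ σ in (0:ℝ)..t, wK' ν A σ (b₀ - σ)) b₀ := by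
  have hb0 : 0 < b₀ := lt_of_lt_of_le ht hb
  obtain ⟨M, hM0, hM⟩ := key_bound hν hA (δ := t / 2) (ρ := (3 * t / 8) ^ 2) (T := t)
    (B := |b₀| + t / 8 + t) (by positivity) (by positivity) ht (by positivity)
  have huIoc : Set.uIoc (0:ℝ) t = Ioc (0:ℝ) t := uIoc_of_le ht.le
  have key := intervalIntegral.hasDerivAt_integral_of_dominated_loc_of_deriv_le
    (𝕜 := ℝ) (μ := volume) (a := (0:ℝ)) (b := t)
    (F := fun b σ => wK ν A σ (b - σ)) (F' := fun b σ => wK' ν A σ (b - σ))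
    (x₀ := b₀) (bound := fun _ => M) (s := Metric.ball b₀ (t / 8)) (Metric.ball_mem_nhds _ (by positivity))
    ?_ ?_ ?_ ?_ ?_ ?_
  · exact key.2
  · refine Filter.Eventually.of_forall fun b => ?_
    rw [huIoc]
    exact ((continuousOn_wK_line ν A b).mono Ioc_subset_Ioi_self).aestronglyMeasurable
      measurableSet_Ioc
  · exact II_wK hν hA hb0 ht
  · rw [huIoc]
    exact ((continuousOn_wK'_line ν A b₀).mono Ioc_subset_Ioi_self).aestronglyMeasurable
      measurableSet_Ioc
  · refine Filter.Eventually.of_forall fun σ hσ => fun b hball => ?_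
    rw [huIoc] at hσ
    have hdist : |b - b₀| < t / 8 := by
      have := Metric.mem_ball.1 hball
      rwa [Real.dist_eq] at this
    rw [Real.norm_eq_abs]
    refine (hM σ (b - σ) hσ.1 hσ.2 ?_ ?_).2
    · have h1 : |b - σ| ≤ |b - b₀| + |b₀ - σ| := by
        calc |b - σ| = |(b - b₀) + (b₀ - σ)| := by ring_nf
          _ ≤ |b - b₀| + |b₀ - σ| := abs_add_le _ _
      have h2 : |b₀ - σ| ≤ |b₀| + |σ| := abs_sub _ _
      rw [abs_of_pos hσ.1] at h2
      linarith [hσ.2]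
    · intro hle
      have h1 : 3 * t / 8 ≤ b - σ := by
        have : b₀ - t / 8 ≤ b := by cases abs_sub_lt_iff.1 hdist; linarith
        linarith
      have h2 : (0:ℝ) ≤ 3 * t / 8 := by positivity
      nlinarith
  · exact intervalIntegrable_const
  · refine Filter.Eventually.of_forall fun σ hσ => fun b hball => ?_
    have h := (hasDerivAt_wK ν A σ (b - σ)).comp b ((hasDerivAt_id b).sub_const σ)
    simp only [mul_one] at h
    exact h

lemma gauss_update_eq (N : ℕ) (z : Fin (N + 1) → ℝ) (u s : ℝ) :
    gauss (N + 1) (Function.update z (Fin.last N) s) u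
      = fK ((N + 1 : ℕ) : ℝ) (∑ i ∈ Finset.univ.erase (Fin.last N), z i ^ 2) u s := by
  rw [gauss, fK]
  congr 1
  have hsum : ∑ i, (Function.update z (Fin.last N) s) i ^ 2
      = s ^ 2 + ∑ i ∈ Finset.univ.erase (Fin.last N), z i ^ 2 := by
    rw [← Finset.add_sum_erase Finset.univ _ (Finset.mem_univ (Fin.last N))]
    congr 1
    · rw [Function.update_self]
    · apply Finset.sum_congr rfl
      intro i hi
      rw [Function.update_of_ne (Finset.ne_of_mem_erase hi)]
  rw [hsum]
  ring_nf

lemma deriv_gauss_update (N : ℕ) (z : Fin (N + 1) → ℝ) (u s₀ : ℝ) :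
    deriv (fun s => gauss (N + 1) (Function.update z (Fin.last N) s) u) s₀
      = wK ((N + 1 : ℕ) : ℝ) (∑ i ∈ Finset.univ.erase (Fin.last N), z i ^ 2) u s₀ := by
  have hfun : (fun s => gauss (N + 1) (Function.update z (Fin.last N) s) u)
      = fun s => fK ((N + 1 : ℕ) : ℝ) (∑ i ∈ Finset.univ.erase (Fin.last N), z i ^ 2) u s :=
    funext fun s => gauss_update_eq N z u s
  rw [hfun]
  rcases eq_or_ne u 0 with rfl | hu
  · have hν : ((N + 1 : ℕ) : ℝ) ≠ 0 := by positivity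
    have h0 : (fun s => fK ((N + 1 : ℕ) : ℝ)
        (∑ i ∈ Finset.univ.erase (Fin.last N), z i ^ 2) (0:ℝ) s) = fun _ => (0:ℝ) :=
      funext fun s => fK_zero hν _ s
    rw [h0, deriv_const, wK_zero]
  · exact (hasDerivAt_fK hu _ _ s₀).deriv

lemma hker_eq (N : ℕ) (x y : Fin (N + 1) → ℝ) (t : ℝ) :
    hker N x y t = -2 * ∫ σ in (0:ℝ)..t,
      wK ((N + 1 : ℕ) : ℝ) (∑ i ∈ Finset.univ.erase (Fin.last N), (x i - y i) ^ 2) σ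
        ((x (Fin.last N) + y (Fin.last N)) + t - σ) := by
  have h1 : ∀ τ : ℝ,
      deriv (fun s => gauss (N + 1)
          (Function.update (x - ystar N y + τ • eN N) (Fin.last N) s) (t - τ))
        ((x - ystar N y + τ • eN N) (Fin.last N))
      = wK ((N + 1 : ℕ) : ℝ) (∑ i ∈ Finset.univ.erase (Fin.last N), (x i - y i) ^ 2) (t - τ)
          ((x (Fin.last N) + y (Fin.last N)) + t - (t - τ)) := by
    intro τ
    rw [deriv_gauss_update]
    have hA : ∑ i ∈ Finset.univ.erase (Fin.last N), ((x - ystar N y + τ • eN N) i) ^ 2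
        = ∑ i ∈ Finset.univ.erase (Fin.last N), (x i - y i) ^ 2 := by
      apply Finset.sum_congr rfl
      intro i hi
      have hne : i ≠ Fin.last N := Finset.ne_of_mem_erase hi
      simp [ystar, eN, Function.update_of_ne hne, Pi.single_eq_of_ne hne]
    have hlast : (x - ystar N y + τ • eN N) (Fin.last N)
        = (x (Fin.last N) + y (Fin.last N)) + t - (t - τ) := by
      simp only [Pi.add_apply, Pi.sub_apply, Pi.smul_apply, smul_eq_mul, ystar, eN,
        Function.update_self, Pi.single_eq_same, mul_one]
      ring
    rw [hA, hlast]
  rw [hker]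
  congr 1
  simp only [h1]
  have h3 := intervalIntegral.integral_comp_sub_left (a := (0:ℝ)) (b := t)
    (f := fun σ => wK ((N + 1 : ℕ) : ℝ)
      (∑ i ∈ Finset.univ.erase (Fin.last N), (x i - y i) ^ 2) σ
      ((x (Fin.last N) + y (Fin.last N)) + t - σ)) t
  simp only [sub_zero, sub_self] at h3
  exact h3

lemma hasDerivAt_K_comp {ν A : ℝ} (hν : 0 ≤ ν) (hA : 0 ≤ A) {t : ℝ} (ht : 0 < t)
    {g : ℝ → ℝ} {u₀ : ℝ} (hg : HasDerivAt g 1 u₀) (hb : t ≤ g u₀) :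
    HasDerivAt (fun u => ∫ σ in (0:ℝ)..t, wK ν A σ (g u - σ))
      (∫ σ in (0:ℝ)..t, wK' ν A σ (g u₀ - σ)) u₀ := by
  have h := (hasDerivAt_K hν hA ht hb).comp u₀ hg
  simp only [mul_one] at h
  exact h


/-- On the boundary `x_N = 0` one has
`∂_t H + ∂_ν H = -2 (∂_{x_N}Γ_N)(x'-y', y_N, t)` where `∂_ν = -∂_{x_N}`
(note `(x - y*)` has last coordinate `y_N` when `x_N = 0`); consequently
`G = Γ_N(x-y,t) - Γ_N(x-y*,t) + H` satisfies `∂_t G + ∂_ν G = 0` on `∂Ω × (0,∞)`. -/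
theorem stmt_7 (N : ℕ) (y : Fin (N + 1) → ℝ) (hy : 0 ≤ y (Fin.last N))
    (x : Fin (N + 1) → ℝ) (hx : x (Fin.last N) = 0) (t : ℝ) (ht : 0 < t) :
    (deriv (fun τ => hker N x y τ) t
        - deriv (fun s => hker N (Function.update x (Fin.last N) s) y t) (x (Fin.last N))
      = -2 * deriv (fun s => gauss (N + 1)
            (Function.update (x - ystar N y) (Fin.last N) s) t)
          ((x - ystar N y) (Fin.last N))) ∧
    deriv (fun τ => Gker N x y τ) t
        - deriv (fun s => Gker N (Function.update x (Fin.last N) s) y t) (x (Fin.last N))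
      = 0 := by
  have hν : (0:ℝ) ≤ ((N + 1 : ℕ) : ℝ) := by positivity
  have hA : (0:ℝ) ≤ ∑ i ∈ Finset.univ.erase (Fin.last N), (x i - y i) ^ 2 :=
    Finset.sum_nonneg fun i _ => sq_nonneg _
  set ν : ℝ := ((N + 1 : ℕ) : ℝ) with hνdef
  set A : ℝ := ∑ i ∈ Finset.univ.erase (Fin.last N), (x i - y i) ^ 2 with hAdef
  set c : ℝ := y (Fin.last N) with hcdef
  -- the function t' ↦ hker N x y t'
  have hfun1 : (fun τ => hker N x y τ)
      = fun τ => -2 * ∫ σ in (0:ℝ)..τ, wK ν A σ ((0 + c) + τ - σ) := by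
    funext τ
    rw [hker_eq N x y τ, hx]
  -- derivative of the R-part
  have hRder : HasDerivAt (fun u => ∫ σ in (0:ℝ)..t, wK ν A σ ((0 + c) + u - σ))
      (∫ σ in (0:ℝ)..t, wK' ν A σ ((0 + c) + t - σ)) t := by
    have h := hasDerivAt_K_comp hν hA ht (g := fun u => (0 + c) + u) (u₀ := t)
      ((hasDerivAt_id t).const_add (0 + c)) (by simp only [hcdef]; linarith)
    simpa using h
  -- derivative of the E-part
  have hEder : HasDerivAt (fun u => ∫ σ in t..u, wK ν A σ ((0 + c) + u - σ))
      (wK ν A t (0 + c)) t := hasDerivAt_E (ν := ν) (A := A) (c := 0 + c) ht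
  -- derivative of P
  have hPder : HasDerivAt (fun u => ∫ σ in (0:ℝ)..u, wK ν A σ ((0 + c) + u - σ))
      ((∫ σ in (0:ℝ)..t, wK' ν A σ ((0 + c) + t - σ)) + wK ν A t (0 + c)) t := by
    apply HasDerivAt.congr_of_eventuallyEq (hRder.add hEder)
    have hmem : Ioo (t / 2) (t + 1) ∈ nhds t :=
      Ioo_mem_nhds (by linarith) (by linarith)
    filter_upwards [hmem] with u hu
    have hbu : (0:ℝ) < (0 + c) + u := by
      have := hu.1
      simp only [hcdef]
      linarith
    have hI1 : IntervalIntegrable (fun σ => wK ν A σ ((0 + c) + u - σ)) volume 0 t :=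
      II_wK hν hA hbu ht
    have hI2 : IntervalIntegrable (fun σ => wK ν A σ ((0 + c) + u - σ)) volume t u := by
      apply (II_wK hν hA hbu (show (0:ℝ) < t + u by linarith [hu.1])).mono_set
      rw [uIcc_of_le (by linarith [hu.1] : (0:ℝ) ≤ t + u)]
      intro σ hσ
      have h1 : min t u ≤ σ := hσ.1
      have h2 : σ ≤ max t u := hσ.2
      have h3 : (0:ℝ) ≤ min t u := le_min ht.le (by linarith [hu.1])
      have h4 : max t u ≤ t + u := max_le (by linarith [hu.1]) (by linarith)
      exact ⟨by linarith, by linarith⟩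
    exact (intervalIntegral.integral_add_adjacent_intervals hI1 hI2).symm
  have hd1 : deriv (fun τ => hker N x y τ) t
      = -2 * ((∫ σ in (0:ℝ)..t, wK' ν A σ ((0 + c) + t - σ)) + wK ν A t (0 + c)) := by
    rw [hfun1]
    exact (hPder.const_mul (-2)).deriv
  -- the function s ↦ hker N (update x last s) y t
  have hSfun : (fun s => hker N (Function.update x (Fin.last N) s) y t)
      = fun s => -2 * ∫ σ in (0:ℝ)..t, wK ν A σ ((s + c) + t - σ) := by
    funext s
    rw [hker_eq N (Function.update x (Fin.last N) s) y t, Function.update_self]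
    have hA' : ∑ i ∈ Finset.univ.erase (Fin.last N),
        (Function.update x (Fin.last N) s i - y i) ^ 2 = A := by
      rw [hAdef]
      exact Finset.sum_congr rfl fun i hi => by
        rw [Function.update_of_ne (Finset.ne_of_mem_erase hi)]
    rw [hA']
  have hSder0 : HasDerivAt (fun s => ∫ σ in (0:ℝ)..t, wK ν A σ ((s + c) + t - σ))
      (∫ σ in (0:ℝ)..t, wK' ν A σ (((0:ℝ) + c) + t - σ)) 0 := by
    have h := hasDerivAt_K_comp hν hA ht (g := fun s => (s + c) + t) (u₀ := (0:ℝ))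
      (((hasDerivAt_id (0:ℝ)).add_const c).add_const t) (by simp only [hcdef]; linarith)
    simpa using h
  have hd2 : deriv (fun s => hker N (Function.update x (Fin.last N) s) y t) (x (Fin.last N))
      = -2 * ∫ σ in (0:ℝ)..t, wK' ν A σ (((0:ℝ) + c) + t - σ) := by
    rw [hx, hSfun]
    exact (hSder0.const_mul (-2)).deriv
  -- RHS of Goal 1
  have hpt : (x - ystar N y) (Fin.last N) = 0 + c := by
    simp only [Pi.sub_apply, ystar, Function.update_self, hx, hcdef]
    ring
  have hAy : ∑ i ∈ Finset.univ.erase (Fin.last N), ((x - ystar N y) i) ^ 2 = A := by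
    rw [hAdef]
    exact Finset.sum_congr rfl fun i hi => by
      have hne : i ≠ Fin.last N := Finset.ne_of_mem_erase hi
      simp [ystar, Function.update_of_ne hne]
  have hRHS : deriv (fun s => gauss (N + 1)
        (Function.update (x - ystar N y) (Fin.last N) s) t) ((x - ystar N y) (Fin.last N))
      = wK ν A t (0 + c) := by
    rw [deriv_gauss_update, hAy, hpt]
  constructor
  · rw [hd1, hd2, hRHS]
    ring
  · -- Goal 2
    have hG1 : (fun τ => Gker N x y τ) = fun τ => hker N x y τ := by
      funext τ
      rw [Gker]
      have hg12 : gauss (N + 1) (x - y) τ = gauss (N + 1) (x - ystar N y) τ := by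
        rw [gauss, gauss]
        have hsum : ∑ i, ((x - y) i) ^ 2 = ∑ i, ((x - ystar N y) i) ^ 2 := by
          rw [← Finset.add_sum_erase Finset.univ (fun i => ((x - y) i) ^ 2)
              (Finset.mem_univ (Fin.last N)),
            ← Finset.add_sum_erase Finset.univ (fun i => ((x - ystar N y) i) ^ 2)
              (Finset.mem_univ (Fin.last N))]
          congr 1
          · simp only [Pi.sub_apply, ystar, Function.update_self, hx]
            ring
          · exact Finset.sum_congr rfl fun i hi => by
              have hne : i ≠ Fin.last N := Finset.ne_of_mem_erase hi
              simp [ystar, Function.update_of_ne hne]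
        rw [hsum]
      rw [hg12]
      ring
    have hG2 : (fun s => Gker N (Function.update x (Fin.last N) s) y t)
        = fun s => fK ν A t (s - c) - fK ν A t (s + c)
            + (-2 * ∫ σ in (0:ℝ)..t, wK ν A σ ((s + c) + t - σ)) := by
      funext s
      rw [Gker]
      congr 1
      · congr 1
        · have hv : Function.update x (Fin.last N) s - y
              = Function.update (x - y) (Fin.last N) (s - c) := by
            funext i
            rcases eq_or_ne i (Fin.last N) with rfl | hne
            · simp [Function.update_self, hcdef]
            · simp [Function.update_of_ne hne]
          rw [hv, gauss_update_eq]
          have : ∑ i ∈ Finset.univ.erase (Fin.last N), ((x - y) i) ^ 2 = A := by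
            rw [hAdef]
            exact Finset.sum_congr rfl fun i hi => by rw [Pi.sub_apply]
          rw [this]
        · have hv : Function.update x (Fin.last N) s - ystar N y
              = Function.update (x - ystar N y) (Fin.last N) (s + c) := by
            funext i
            rcases eq_or_ne i (Fin.last N) with rfl | hne
            · simp only [Pi.sub_apply, Function.update_self, ystar, hcdef]
              ring
            · simp [ystar, Function.update_of_ne hne]
          rw [hv, gauss_update_eq, hAy]
      · exact congrFun hSfun s
    have hodd : wK ν A t (0 - c) = -(wK ν A t (0 + c)) := by
      rw [wK, wK, fK, fK]
      have h : ((0:ℝ) - c) ^ 2 = (0 + c) ^ 2 := by ring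
      rw [h]
      ring
    have hfa : HasDerivAt (fun s => fK ν A t (s - c)) (wK ν A t (0 - c)) 0 := by
      have h := (hasDerivAt_fK ht.ne' ν A ((0:ℝ) - c)).comp 0
        ((hasDerivAt_id (0:ℝ)).sub_const c)
      simp only [mul_one] at h
      exact h
    have hfb : HasDerivAt (fun s => fK ν A t (s + c)) (wK ν A t (0 + c)) 0 := by
      have h := (hasDerivAt_fK ht.ne' ν A ((0:ℝ) + c)).comp 0
        ((hasDerivAt_id (0:ℝ)).add_const c)
      simp only [mul_one] at h
      exact h
    have hall : HasDerivAt (fun s => fK ν A t (s - c) - fK ν A t (s + c)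
        + (-2 * ∫ σ in (0:ℝ)..t, wK ν A σ ((s + c) + t - σ)))
        (wK ν A t (0 - c) - wK ν A t (0 + c)
          + (-2 * ∫ σ in (0:ℝ)..t, wK' ν A σ (((0:ℝ) + c) + t - σ))) 0 :=
      (hfa.sub hfb).add (hSder0.const_mul (-2))
    have hd2G : deriv (fun s => Gker N (Function.update x (Fin.last N) s) y t) (x (Fin.last N))
        = wK ν A t (0 - c) - wK ν A t (0 + c)
          + (-2 * ∫ σ in (0:ℝ)..t, wK' ν A σ (((0:ℝ) + c) + t - σ)) := by
      rw [hx, hG2]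
      exact hall.deriv
    have hd1G : deriv (fun τ => Gker N x y τ) t
        = -2 * ((∫ σ in (0:ℝ)..t, wK' ν A σ ((0 + c) + t - σ)) + wK ν A t (0 + c)) := by
      rw [hG1]
      exact hd1
    rw [hd1G, hd2G, hodd]
    ring
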